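/- arXiv:2207.04486 — 2 statements merged into one kernel-verified Lean document; each statement's English description precedes it below -/
import Mathlib

section
/- For every bounded continuous section f of π, every y ∈ Y and every t > 0, the map s ↦ iQ_s f(y) is differentiable at t if and only if iD⁺f(y, t) = iD⁻f(y, t). -/
open Metric Set Filter Topology MeasureTheory

/-- `F(t,y,z) = max_j f_j(z) + d(f(z), π⁻¹(y))² / (2t)`. -/
noncomputable def hlF {κ : ℕ} (Y : Set (EuclideanSpace ℝ (Fin κ)))
    (π : EuclideanSpace ℝ (Fin κ) → Y) (f : Y → EuclideanSpace ℝ (Fin κ))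
    (t : ℝ) (y z : Y) : ℝ :=
  (⨆ j, f z j) + (Metric.infDist (f z) (π ⁻¹' {y}))^2 / (2*t)

/-- The intrinsic Hopf–Lax semigroup `iQ_t f(y) = inf_{z ∈ Y} F(t,y,z)`. -/
noncomputable def iQ {κ : ℕ} (Y : Set (EuclideanSpace ℝ (Fin κ)))
    (π : EuclideanSpace ℝ (Fin κ) → Y) (f : Y → EuclideanSpace ℝ (Fin κ))
    (t : ℝ) (y : Y) : ℝ :=
  ⨅ z : Y, hlF Y π f t y z

/-- A minimizing sequence for `iQ_t f(y)`. -/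
def IsMinSeq {κ : ℕ} (Y : Set (EuclideanSpace ℝ (Fin κ)))
    (π : EuclideanSpace ℝ (Fin κ) → Y) (f : Y → EuclideanSpace ℝ (Fin κ))
    (t : ℝ) (y : Y) (u : ℕ → Y) : Prop :=
  Filter.Tendsto (fun n => hlF Y π f t y (u n)) Filter.atTop (nhds (iQ Y π f t y))

/-- `iD⁺f(y,t)`. -/
noncomputable def iDp {κ : ℕ} (Y : Set (EuclideanSpace ℝ (Fin κ)))
    (π : EuclideanSpace ℝ (Fin κ) → Y) (f : Y → EuclideanSpace ℝ (Fin κ))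
    (y : Y) (t : ℝ) : ℝ :=
  sSup { a : ℝ | ∃ u : ℕ → Y, IsMinSeq Y π f t y u ∧
    a = Filter.limsup (fun n => Metric.infDist (f (u n)) (π ⁻¹' {y})) Filter.atTop }

/-- `iD⁻f(y,t)`. -/
noncomputable def iDm {κ : ℕ} (Y : Set (EuclideanSpace ℝ (Fin κ)))
    (π : EuclideanSpace ℝ (Fin κ) → Y) (f : Y → EuclideanSpace ℝ (Fin κ))
    (y : Y) (t : ℝ) : ℝ :=
  sInf { a : ℝ | ∃ u : ℕ → Y, IsMinSeq Y π f t y u ∧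
    a = Filter.liminf (fun n => Metric.infDist (f (u n)) (π ⁻¹' {y})) Filter.atTop }

/-!
With `r = (2t)⁻¹`, `iQ_t f(y)` is the infimum over `z` of the affine functions
`r ↦ a z + b z * r`, where `a z = maxⱼ fⱼ(z)` is bounded below and `b z = d(f z, π⁻¹ y)²` is
bounded. Such an infimum is concave and Lipschitz in `r`, so it has one-sided derivatives
everywhere. Comparing the infimum at `r ≠ r₀` with a minimizing sequence `(u n)` at `r₀` gives
`rightDeriv ≤ liminf b (u n) ≤ limsup b (u n) ≤ leftDeriv`, and near-minimizers at `r₀ ± 1/n`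
realize both extremes. Hence `iD⁺f(y,t)` and `iD⁻f(y,t)` are the square roots of the left and
right derivatives in `r`, and differentiability at `t` means that these agree.
-/

lemma ConcaveOn.differentiableWithinAt_Ioi_of_mem_interior {S : Set ℝ} {f : ℝ → ℝ} {x : ℝ}
    (hf : ConcaveOn ℝ S f) (hx : x ∈ interior S) : DifferentiableWithinAt ℝ f (Ioi x) x := by
  simpa using (hf.neg.differentiableWithinAt_Ioi_of_mem_interior hx).neg

lemma ConcaveOn.differentiableWithinAt_Iio_of_mem_interior {S : Set ℝ} {f : ℝ → ℝ} {x : ℝ}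
    (hf : ConcaveOn ℝ S f) (hx : x ∈ interior S) : DifferentiableWithinAt ℝ f (Iio x) x := by
  simpa using (hf.neg.differentiableWithinAt_Iio_of_mem_interior hx).neg

lemma differentiableAt_iff_leftDeriv_eq_rightDeriv {F : Type*} [NormedAddCommGroup F]
    [NormedSpace ℝ F] {f : ℝ → F} {x : ℝ}
    (hl : DifferentiableWithinAt ℝ f (Iio x) x) (hr : DifferentiableWithinAt ℝ f (Ioi x) x) :
    DifferentiableAt ℝ f x ↔ derivWithin f (Iio x) x = derivWithin f (Ioi x) x := by
  refine ⟨fun h => ?_, fun h => ?_⟩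
  · rw [h.derivWithin (uniqueDiffWithinAt_Iio x), h.derivWithin (uniqueDiffWithinAt_Ioi x)]
  · refine (hasDerivAt_iff_tendsto_slope_left_right (f' := derivWithin f (Ioi x) x).2
      ⟨?_, ?_⟩).differentiableAt
    · exact (hasDerivWithinAt_iff_tendsto_slope' (by simp)).1 (h ▸ hl.hasDerivWithinAt)
    · exact (hasDerivWithinAt_iff_tendsto_slope' (by simp)).1 hr.hasDerivWithinAt

lemma Function.Involutive.differentiableAt_comp_iff {𝕜 E F : Type*} [NontriviallyNormedField 𝕜]
    [NormedAddCommGroup E] [NormedSpace 𝕜 E] [NormedAddCommGroup F] [NormedSpace 𝕜 F]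
    {g : E → E} {φ : E → F} (hg : Function.Involutive g) {x : E}
    (hgx : DifferentiableAt 𝕜 g x) (hggx : DifferentiableAt 𝕜 g (g x)) :
    DifferentiableAt 𝕜 (φ ∘ g) x ↔ DifferentiableAt 𝕜 φ (g x) := by
  refine ⟨fun h => ?_, fun h => h.comp x hgx⟩
  have h' : DifferentiableAt 𝕜 (φ ∘ g) (g (g x)) := by rwa [hg x]
  simpa [Function.comp_def, hg _] using h'.comp (g x) hggx

namespace InfAffine

variable {Z : Type*} {a b d : Z → ℝ} {C B M r₀ : ℝ}

noncomputable def infAffine (a b : Z → ℝ) (r : ℝ) : ℝ := ⨅ z, (a z + b z * r)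

def IsMinimizing (a b : Z → ℝ) (r : ℝ) (u : ℕ → Z) : Prop :=
  Tendsto (fun n => a (u n) + b (u n) * r) atTop (𝓝 (infAffine a b r))

lemma bddBelow_range_affine (ha : ∀ z, C ≤ a z) (hb : ∀ z, |b z| ≤ B) (r : ℝ) :
    BddBelow (range fun z => a z + b z * r) := by
  refine ⟨C - B * |r|, ?_⟩
  rintro _ ⟨z, rfl⟩
  have : |b z * r| ≤ B * |r| := by
    rw [abs_mul]; exact mul_le_mul_of_nonneg_right (hb z) (abs_nonneg r)
  linarith [ha z, neg_abs_le (b z * r)]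

lemma isBoundedUnder_le_comp (hb : ∀ z, |b z| ≤ B) (u : ℕ → Z) :
    IsBoundedUnder (· ≤ ·) atTop (b ∘ u) :=
  isBoundedUnder_of ⟨B, fun n => (le_abs_self _).trans (hb (u n))⟩

lemma isBoundedUnder_ge_comp (hb : ∀ z, |b z| ≤ B) (u : ℕ → Z) :
    IsBoundedUnder (· ≥ ·) atTop (b ∘ u) :=
  isBoundedUnder_of ⟨-B, fun n => (abs_le.1 (hb (u n))).1⟩

lemma infAffine_le (ha : ∀ z, C ≤ a z) (hb : ∀ z, |b z| ≤ B) (z : Z) (r : ℝ) :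
    infAffine a b r ≤ a z + b z * r :=
  ciInf_le (bddBelow_range_affine ha hb r) z

lemma abs_sq_le_sq (hd0 : ∀ z, 0 ≤ d z) (hdM : ∀ z, d z ≤ M) (z : Z) : |d z ^ 2| ≤ M ^ 2 := by
  rw [abs_of_nonneg (sq_nonneg _)]
  exact pow_le_pow_left₀ (hd0 z) (hdM z) 2

lemma comp_eq_sqrt_sq (hd0 : ∀ z, 0 ≤ d z) (u : ℕ → Z) :
    (fun n => d (u n)) = Real.sqrt ∘ (fun z => d z ^ 2) ∘ u :=
  funext fun n => (Real.sqrt_sq (hd0 (u n))).symm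

variable [Nonempty Z]

lemma infAffine_le_add_mul_abs (ha : ∀ z, C ≤ a z) (hb : ∀ z, |b z| ≤ B) (r r' : ℝ) :
    infAffine a b r ≤ infAffine a b r' + B * |r - r'| := by
  rw [← sub_le_iff_le_add]
  refine le_ciInf fun z => ?_
  have : |b z * (r - r')| ≤ B * |r - r'| := by
    rw [abs_mul]; exact mul_le_mul_of_nonneg_right (hb z) (abs_nonneg _)
  linarith [infAffine_le ha hb z r, le_abs_self (b z * (r - r'))]

lemma concaveOn_infAffine (ha : ∀ z, C ≤ a z) (hb : ∀ z, |b z| ≤ B) :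
    ConcaveOn ℝ univ (infAffine a b) := by
  refine ⟨convex_univ, fun r _ r' _ p q hp hq hpq => le_ciInf fun z => ?_⟩
  calc p • infAffine a b r + q • infAffine a b r'
      ≤ p * (a z + b z * r) + q * (a z + b z * r') := by
        simp only [smul_eq_mul]
        gcongr
        exacts [infAffine_le ha hb z r, infAffine_le ha hb z r']
    _ = a z + b z * (p • r + q • r') := by
        simp only [smul_eq_mul]; linear_combination a z * hpq

lemma differentiableWithinAt_Ioi (ha : ∀ z, C ≤ a z) (hb : ∀ z, |b z| ≤ B) (r : ℝ) :
    DifferentiableWithinAt ℝ (infAffine a b) (Ioi r) r :=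
  (concaveOn_infAffine ha hb).differentiableWithinAt_Ioi_of_mem_interior (by simp)

lemma differentiableWithinAt_Iio (ha : ∀ z, C ≤ a z) (hb : ∀ z, |b z| ≤ B) (r : ℝ) :
    DifferentiableWithinAt ℝ (infAffine a b) (Iio r) r :=
  (concaveOn_infAffine ha hb).differentiableWithinAt_Iio_of_mem_interior (by simp)

lemma tendsto_slope_nhdsGT (ha : ∀ z, C ≤ a z) (hb : ∀ z, |b z| ≤ B) (r : ℝ) :
    Tendsto (slope (infAffine a b) r) (𝓝[>] r) (𝓝 (derivWithin (infAffine a b) (Ioi r) r)) :=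
  (hasDerivWithinAt_iff_tendsto_slope' (by simp)).1
    (differentiableWithinAt_Ioi ha hb r).hasDerivWithinAt

lemma tendsto_slope_nhdsLT (ha : ∀ z, C ≤ a z) (hb : ∀ z, |b z| ≤ B) (r : ℝ) :
    Tendsto (slope (infAffine a b) r) (𝓝[<] r) (𝓝 (derivWithin (infAffine a b) (Iio r) r)) :=
  (hasDerivWithinAt_iff_tendsto_slope' (by simp)).1
    (differentiableWithinAt_Iio ha hb r).hasDerivWithinAt

lemma rightDeriv_le_liminf (ha : ∀ z, C ≤ a z) (hb : ∀ z, |b z| ≤ B) {u : ℕ → Z}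
    (hu : IsMinimizing a b r₀ u) :
    derivWithin (infAffine a b) (Ioi r₀) r₀ ≤ liminf (b ∘ u) atTop := by
  refine le_of_tendsto (tendsto_slope_nhdsGT ha hb r₀)
    (eventually_nhdsWithin_of_forall fun r hr => ?_)
  have hlim : Tendsto (fun n => (infAffine a b r - (a (u n) + b (u n) * r₀)) / (r - r₀)) atTop
      (𝓝 (slope (infAffine a b) r₀ r)) := by
    rw [slope_def_field]; exact (hu.const_sub _).div_const _
  rw [← hlim.liminf_eq]
  refine liminf_le_liminf (Eventually.of_forall fun n => ?_) hlim.isBoundedUnder_ge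
    (isBoundedUnder_le_comp hb u).isCoboundedUnder_ge
  rw [Function.comp_apply, div_le_iff₀ (sub_pos.2 (mem_Ioi.1 hr))]
  linarith [infAffine_le ha hb (u n) r]

lemma limsup_le_leftDeriv (ha : ∀ z, C ≤ a z) (hb : ∀ z, |b z| ≤ B) {u : ℕ → Z}
    (hu : IsMinimizing a b r₀ u) :
    limsup (b ∘ u) atTop ≤ derivWithin (infAffine a b) (Iio r₀) r₀ := by
  refine ge_of_tendsto (tendsto_slope_nhdsLT ha hb r₀)
    (eventually_nhdsWithin_of_forall fun r hr => ?_)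
  have hlim : Tendsto (fun n => (infAffine a b r - (a (u n) + b (u n) * r₀)) / (r - r₀)) atTop
      (𝓝 (slope (infAffine a b) r₀ r)) := by
    rw [slope_def_field]; exact (hu.const_sub _).div_const _
  rw [← hlim.limsup_eq]
  refine limsup_le_limsup (Eventually.of_forall fun n => ?_)
    (isBoundedUnder_ge_comp hb u).isCoboundedUnder_le hlim.isBoundedUnder_le
  rw [Function.comp_apply, le_div_iff_of_neg (sub_neg.2 (mem_Iio.1 hr))]
  linarith [infAffine_le ha hb (u n) r]

/-- The slack `ε n ^ 2` is `o(ε n)`, so the bound survives division by `ε n`: `b (u n)` is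
bounded by a difference quotient of `infAffine a b` at `r₀`, up to `ε n`. -/
lemma exists_isMinimizing_mul_le (ha : ∀ z, C ≤ a z) (hb : ∀ z, |b z| ≤ B) {ε : ℕ → ℝ}
    (hε0 : ∀ n, ε n ≠ 0) (hε : Tendsto ε atTop (𝓝 0)) :
    ∃ u : ℕ → Z, IsMinimizing a b r₀ u ∧
      ∀ n, b (u n) * ε n ≤ infAffine a b (r₀ + ε n) - infAffine a b r₀ + ε n ^ 2 := by
  have hex : ∀ n, ∃ z, a z + b z * (r₀ + ε n) < infAffine a b (r₀ + ε n) + ε n ^ 2 := fun n =>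
    exists_lt_of_ciInf_lt (lt_add_of_pos_right _ (sq_pos_of_ne_zero (hε0 n)))
  choose u hu using hex
  have hmul : ∀ n, b (u n) * ε n ≤ infAffine a b (r₀ + ε n) - infAffine a b r₀ + ε n ^ 2 :=
    fun n => by linarith [hu n, infAffine_le ha hb (u n) r₀]
  refine ⟨u, ?_, hmul⟩
  have hupper : ∀ n, a (u n) + b (u n) * r₀ ≤ infAffine a b r₀ + (2 * B * |ε n| + ε n ^ 2) := by
    intro n
    have hlip := infAffine_le_add_mul_abs ha hb (r₀ + ε n) r₀
    have hbε : -(b (u n) * ε n) ≤ B * |ε n| :=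
      calc -(b (u n) * ε n) ≤ |b (u n)| * |ε n| := (neg_le_abs _).trans_eq (abs_mul _ _)
        _ ≤ B * |ε n| := by gcongr; exact hb _
    rw [add_sub_cancel_left] at hlip
    linarith [hu n]
  refine tendsto_of_tendsto_of_tendsto_of_le_of_le tendsto_const_nhds ?_
    (fun n => infAffine_le ha hb (u n) r₀) hupper
  simpa using ((hε.abs.const_mul (2 * B)).add (hε.pow 2)).const_add (infAffine a b r₀)

lemma exists_isMinimizing_tendsto_rightDeriv (ha : ∀ z, C ≤ a z) (hb : ∀ z, |b z| ≤ B) (r₀ : ℝ) :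
    ∃ u : ℕ → Z, IsMinimizing a b r₀ u ∧
      Tendsto (b ∘ u) atTop (𝓝 (derivWithin (infAffine a b) (Ioi r₀) r₀)) := by
  set ε : ℕ → ℝ := fun n => 1 / (n + 1)
  have hε : Tendsto ε atTop (𝓝 0) := tendsto_one_div_add_atTop_nhds_zero_nat
  have hεpos : ∀ n, 0 < ε n := fun n => Nat.one_div_pos_of_nat
  obtain ⟨u, hu, hmul⟩ := exists_isMinimizing_mul_le ha hb (fun n => (hεpos n).ne') hε
  have hquot : Tendsto (fun n => slope (infAffine a b) r₀ (r₀ + ε n) + ε n) atTop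
      (𝓝 (derivWithin (infAffine a b) (Ioi r₀) r₀)) := by
    rw [← add_zero (derivWithin _ _ _)]
    refine ((tendsto_slope_nhdsGT ha hb r₀).comp (tendsto_nhdsWithin_iff.2 ⟨?_, ?_⟩)).add hε
    · simpa using hε.const_add r₀
    · exact Eventually.of_forall fun n => lt_add_of_pos_right r₀ (hεpos n)
  refine ⟨u, hu, tendsto_of_le_liminf_of_limsup_le (rightDeriv_le_liminf ha hb hu) ?_
    (isBoundedUnder_le_comp hb u) (isBoundedUnder_ge_comp hb u)⟩
  rw [← hquot.limsup_eq]
  refine limsup_le_limsup (Eventually.of_forall fun n => ?_)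
    (isBoundedUnder_ge_comp hb u).isCoboundedUnder_le hquot.isBoundedUnder_le
  beta_reduce
  rw [Function.comp_apply, slope_def_field, add_sub_cancel_left, ← sub_le_iff_le_add,
    le_div_iff₀ (hεpos n)]
  linarith [hmul n]

lemma exists_isMinimizing_tendsto_leftDeriv (ha : ∀ z, C ≤ a z) (hb : ∀ z, |b z| ≤ B) (r₀ : ℝ) :
    ∃ u : ℕ → Z, IsMinimizing a b r₀ u ∧
      Tendsto (b ∘ u) atTop (𝓝 (derivWithin (infAffine a b) (Iio r₀) r₀)) := by
  set ε : ℕ → ℝ := fun n => -(1 / (n + 1))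
  have hε : Tendsto ε atTop (𝓝 0) := by
    simpa only [neg_zero] using (tendsto_one_div_add_atTop_nhds_zero_nat (𝕜 := ℝ)).neg
  have hεneg : ∀ n, ε n < 0 := fun n => neg_neg_of_pos Nat.one_div_pos_of_nat
  obtain ⟨u, hu, hmul⟩ := exists_isMinimizing_mul_le ha hb (fun n => (hεneg n).ne) hε
  have hquot : Tendsto (fun n => slope (infAffine a b) r₀ (r₀ + ε n) + ε n) atTop
      (𝓝 (derivWithin (infAffine a b) (Iio r₀) r₀)) := by
    rw [← add_zero (derivWithin _ _ _)]
    refine ((tendsto_slope_nhdsLT ha hb r₀).comp (tendsto_nhdsWithin_iff.2 ⟨?_, ?_⟩)).add hε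
    · simpa using hε.const_add r₀
    · exact Eventually.of_forall fun n => add_lt_of_neg_right r₀ (hεneg n)
  refine ⟨u, hu, tendsto_of_le_liminf_of_limsup_le ?_ (limsup_le_leftDeriv ha hb hu)
    (isBoundedUnder_le_comp hb u) (isBoundedUnder_ge_comp hb u)⟩
  rw [← hquot.liminf_eq]
  refine liminf_le_liminf (Eventually.of_forall fun n => ?_) hquot.isBoundedUnder_ge
    (isBoundedUnder_le_comp hb u).isCoboundedUnder_ge
  rw [Function.comp_apply, slope_def_field, add_sub_cancel_left, ← le_sub_iff_add_le,
    div_le_iff_of_neg (hεneg n)]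
  linarith [hmul n]

lemma rightDeriv_nonneg (ha : ∀ z, C ≤ a z) (hb : ∀ z, |b z| ≤ B) (hb0 : ∀ z, 0 ≤ b z)
    (r₀ : ℝ) : 0 ≤ derivWithin (infAffine a b) (Ioi r₀) r₀ :=
  have ⟨u, _, hlim⟩ := exists_isMinimizing_tendsto_rightDeriv ha hb r₀
  ge_of_tendsto' hlim fun n => hb0 (u n)

lemma leftDeriv_nonneg (ha : ∀ z, C ≤ a z) (hb : ∀ z, |b z| ≤ B) (hb0 : ∀ z, 0 ≤ b z)
    (r₀ : ℝ) : 0 ≤ derivWithin (infAffine a b) (Iio r₀) r₀ :=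
  have ⟨u, _, hlim⟩ := exists_isMinimizing_tendsto_leftDeriv ha hb r₀
  ge_of_tendsto' hlim fun n => hb0 (u n)

lemma isGreatest_limsup (ha : ∀ z, C ≤ a z) (hd0 : ∀ z, 0 ≤ d z) (hdM : ∀ z, d z ≤ M) (r₀ : ℝ) :
    IsGreatest {x | ∃ u, IsMinimizing a (fun z => d z ^ 2) r₀ u ∧
        x = limsup (fun n => d (u n)) atTop}
      √(derivWithin (infAffine a fun z => d z ^ 2) (Iio r₀) r₀) := by
  have hb := abs_sq_le_sq hd0 hdM
  obtain ⟨u, hu, hlim⟩ := exists_isMinimizing_tendsto_leftDeriv ha hb r₀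
  refine ⟨⟨u, hu, ?_⟩, ?_⟩
  · rw [comp_eq_sqrt_sq hd0, ((Real.continuous_sqrt.tendsto _).comp hlim).limsup_eq]
  · rintro _ ⟨v, hv, rfl⟩
    rw [comp_eq_sqrt_sq hd0, ← Real.sqrt_monotone.map_limsup_of_continuousAt _
      Real.continuous_sqrt.continuousAt (isBoundedUnder_le_comp hb v)
      (isBoundedUnder_ge_comp hb v).isCoboundedUnder_le]
    exact Real.sqrt_le_sqrt (limsup_le_leftDeriv ha hb hv)

lemma isLeast_liminf (ha : ∀ z, C ≤ a z) (hd0 : ∀ z, 0 ≤ d z) (hdM : ∀ z, d z ≤ M) (r₀ : ℝ) :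
    IsLeast {x | ∃ u, IsMinimizing a (fun z => d z ^ 2) r₀ u ∧
        x = liminf (fun n => d (u n)) atTop}
      √(derivWithin (infAffine a fun z => d z ^ 2) (Ioi r₀) r₀) := by
  have hb := abs_sq_le_sq hd0 hdM
  obtain ⟨u, hu, hlim⟩ := exists_isMinimizing_tendsto_rightDeriv ha hb r₀
  refine ⟨⟨u, hu, ?_⟩, ?_⟩
  · rw [comp_eq_sqrt_sq hd0, ((Real.continuous_sqrt.tendsto _).comp hlim).liminf_eq]
  · rintro _ ⟨v, hv, rfl⟩
    rw [comp_eq_sqrt_sq hd0, ← Real.sqrt_monotone.map_liminf_of_continuousAt _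
      Real.continuous_sqrt.continuousAt (isBoundedUnder_le_comp hb v).isCoboundedUnder_ge
      (isBoundedUnder_ge_comp hb v)]
    exact Real.sqrt_le_sqrt (rightDeriv_le_liminf ha hb hv)

end InfAffine

open InfAffine

section HopfLax

variable {κ : ℕ} {Y : Set (EuclideanSpace ℝ (Fin κ))} {π : EuclideanSpace ℝ (Fin κ) → Y}
  {f : Y → EuclideanSpace ℝ (Fin κ)} {y : Y} {t : ℝ}

lemma neg_norm_le_iSup_apply {ι : Type*} [Fintype ι] (x : EuclideanSpace ℝ ι) :
    -‖x‖ ≤ ⨆ j, x j := by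
  cases isEmpty_or_nonempty ι with
  | inl _ => simp [Real.iSup_of_isEmpty]
  | inr hι =>
    obtain ⟨j⟩ := hι
    calc -‖x‖ ≤ -|x j| := neg_le_neg (PiLp.norm_apply_le x j)
      _ ≤ x j := neg_abs_le _
      _ ≤ ⨆ j, x j := le_ciSup (Finite.bddAbove (finite_range _)) j

lemma hlF_eq_affine (z : Y) :
    hlF Y π f t y z = (⨆ j, f z j) + infDist (f z) (π ⁻¹' {y}) ^ 2 * (2 * t)⁻¹ := by
  rw [hlF, div_eq_mul_inv]

lemma iQ_eq_infAffine : iQ Y π f t y =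
    infAffine (fun z => ⨆ j, f z j) (fun z => infDist (f z) (π ⁻¹' {y}) ^ 2) (2 * t)⁻¹ := by
  simp only [iQ, hlF_eq_affine, infAffine]

lemma isMinSeq_iff_isMinimizing {u : ℕ → Y} : IsMinSeq Y π f t y u ↔
    IsMinimizing (fun z => ⨆ j, f z j) (fun z => infDist (f z) (π ⁻¹' {y}) ^ 2) (2 * t)⁻¹ u := by
  simp only [IsMinSeq, IsMinimizing, hlF_eq_affine, iQ_eq_infAffine]

/-- The change of variable `r = (2t)⁻¹` reverses orientation, so `iD⁺` is governed by the
left derivative in `r`. -/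
lemma iDp_eq_sqrt_leftDeriv {C M : ℝ} (hA : ∀ z, C ≤ ⨆ j, f z j)
    (hd : ∀ z, infDist (f z) (π ⁻¹' {y}) ≤ M) :
    iDp Y π f y t = √(derivWithin
      (infAffine (fun z => ⨆ j, f z j) (fun z => infDist (f z) (π ⁻¹' {y}) ^ 2))
      (Iio (2 * t)⁻¹) (2 * t)⁻¹) := by
  have : Nonempty Y := ⟨y⟩
  simp only [iDp, isMinSeq_iff_isMinimizing]
  exact (isGreatest_limsup hA (fun _ => infDist_nonneg) hd _).csSup_eq

lemma iDm_eq_sqrt_rightDeriv {C M : ℝ} (hA : ∀ z, C ≤ ⨆ j, f z j)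
    (hd : ∀ z, infDist (f z) (π ⁻¹' {y}) ≤ M) :
    iDm Y π f y t = √(derivWithin
      (infAffine (fun z => ⨆ j, f z j) (fun z => infDist (f z) (π ⁻¹' {y}) ^ 2))
      (Ioi (2 * t)⁻¹) (2 * t)⁻¹) := by
  have : Nonempty Y := ⟨y⟩
  simp only [iDm, isMinSeq_iff_isMinimizing]
  exact (isLeast_liminf hA (fun _ => infDist_nonneg) hd _).csInf_eq

end HopfLax

theorem stmt_12_general (κ : ℕ)
    (Y : Set (EuclideanSpace ℝ (Fin κ)))
    (π : EuclideanSpace ℝ (Fin κ) → Y)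
    (f : Y → EuclideanSpace ℝ (Fin κ))
    (hfb : Bornology.IsBounded (Set.range f))
    (y : Y) (t : ℝ) (ht : 0 < t) :
    DifferentiableAt ℝ (fun s => iQ Y π f s y) t ↔ iDp Y π f y t = iDm Y π f y t := by
  have : Nonempty Y := ⟨y⟩
  obtain ⟨R, hR⟩ := hfb.exists_norm_le
  have hA : ∀ z, -R ≤ ⨆ j, f z j := fun z =>
    (neg_le_neg (hR _ (mem_range_self z))).trans (neg_norm_le_iSup_apply _)
  have hd : ∀ z, infDist (f z) (π ⁻¹' {y}) ≤ infDist (f y) (π ⁻¹' {y}) + 2 * R := fun z =>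
    infDist_le_infDist_add_dist.trans <| by
      linarith [dist_le_norm_add_norm (f z) (f y), hR _ (mem_range_self z),
        hR _ (mem_range_self y)]
  have hb := abs_sq_le_sq (fun _ => infDist_nonneg) hd
  have hinv : Function.Involutive fun s : ℝ => (2 * s)⁻¹ := fun s => by
    beta_reduce
    rw [mul_inv, inv_inv, ← mul_assoc, inv_mul_cancel₀ two_ne_zero, one_mul]
  have hinv_diff : ∀ s : ℝ, s ≠ 0 → DifferentiableAt ℝ (fun s : ℝ => (2 * s)⁻¹) s := fun s hs =>
    (differentiableAt_id.const_mul 2).inv (mul_ne_zero two_ne_zero hs)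
  have hQ : (fun s => iQ Y π f s y) = infAffine (fun z => ⨆ j, f z j)
      (fun z => infDist (f z) (π ⁻¹' {y}) ^ 2) ∘ fun s : ℝ => (2 * s)⁻¹ :=
    funext fun s => iQ_eq_infAffine
  rw [hQ, hinv.differentiableAt_comp_iff (hinv_diff t ht.ne') (hinv_diff _ (by positivity)),
    differentiableAt_iff_leftDeriv_eq_rightDeriv (differentiableWithinAt_Iio hA hb _)
      (differentiableWithinAt_Ioi hA hb _),
    iDp_eq_sqrt_leftDeriv hA hd, iDm_eq_sqrt_rightDeriv hA hd,
    Real.sqrt_inj (leftDeriv_nonneg hA hb (fun _ => sq_nonneg _) _)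
      (rightDeriv_nonneg hA hb (fun _ => sq_nonneg _) _)]

theorem stmt_12 (κ : ℕ) (hκ : 1 ≤ κ)
    (Y : Set (EuclideanSpace ℝ (Fin κ))) (hY : Y.Nonempty) (hYb : Bornology.IsBounded Y)
    (π : EuclideanSpace ℝ (Fin κ) → Y) (hπc : Continuous π) (hπo : IsOpenMap π)
    (hπs : Function.Surjective π)
    (f : Y → EuclideanSpace ℝ (Fin κ)) (hfc : Continuous f)
    (hfb : Bornology.IsBounded (Set.range f)) (hsec : ∀ y : Y, π (f y) = y)

    (y : Y) (t : ℝ) (ht : 0 < t) :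
    DifferentiableAt ℝ (fun s => iQ Y π f s y) t ↔ iDp Y π f y t = iDm Y π f y t :=
  stmt_12_general κ Y π f hfb y t ht
end

section
/- Let f be a bounded continuous section of π, let y ∈ Y, let (t_n) ⊂ (0, ∞) with t_n → 0, and let (y_n) be a sequence in Y such that max_{j=1,…,κ} f_j(y_n) + d(f(y_n), π⁻¹(y))²/(2t_n) ≤ iQ_{t_n} f(y) + 1/n for all n ≥ 1. Then d(f(y_n), π⁻¹(y)) → 0, y_n → y, and f(y_n) → f(y). -/
open Metric Set Filter Topology MeasureTheory

/-!
Comparing a `1/n`-minimizer `u n` of `F(tₙ, y, ·)` with the competitor `z = y`, whose distance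
term vanishes because `f y ∈ π⁻¹(y)`, and using `|maxⱼ fⱼ| ≤ ‖f‖ ≤ M`, gives
`d(f(u n), π⁻¹(y))² ≤ 2tₙ(2M + 1/n) → 0`. As `f ∘ u` is bounded and `π` is uniformly continuous
on compact sets, `u n = π(f(u n))` is then close to `π` of a nearby fiber point, i.e. to `y`;
continuity of `f` gives `f(u n) → f y`.
-/

theorem abs_iSup_apply_le_norm {ι : Type*} [Fintype ι] (x : EuclideanSpace ℝ ι) :
    |⨆ i, x i| ≤ ‖x‖ := by
  cases isEmpty_or_nonempty ι with
  | inl _ => simp -- `⨆` over an empty index type is `0` in `ℝ`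
  | inr _ =>
    have hx : ∀ i, |x i| ≤ ‖x‖ := fun i => by simpa using PiLp.norm_apply_le x i
    refine abs_le.2 ⟨?_, ciSup_le fun i => (le_abs_self _).trans (hx i)⟩
    let i₀ := Classical.arbitrary ι
    exact (neg_le_of_abs_le (hx i₀)).trans (le_ciSup (Set.finite_range _).bddAbove i₀)

/- Fiber points within distance `1` of `a i` stay in the compact set `cthickening 1 (range a)`,
on which `π` is uniformly continuous. -/
theorem tendsto_of_infDist_fiber_tendsto_zero {X Z ι : Type*} [PseudoMetricSpace X]
    [ProperSpace X] [PseudoMetricSpace Z] {π : X → Z} (hπ : Continuous π) {l : Filter ι}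
    {a : ι → X} (ha : Bornology.IsBounded (range a)) {y : Z} (hy : (π ⁻¹' {y}).Nonempty)
    (hd : Tendsto (fun i => infDist (a i) (π ⁻¹' {y})) l (𝓝 0)) :
    Tendsto (π ∘ a) l (𝓝 y) := by
  rw [Metric.tendsto_nhds]
  intro ε hε
  set K := cthickening 1 (range a)
  have hK : IsCompact K := isCompact_of_isClosed_isBounded isClosed_cthickening ha.cthickening
  obtain ⟨δ, hδ, hπδ⟩ :=
    Metric.uniformContinuousOn_iff.1 (hK.uniformContinuousOn_of_continuous hπ.continuousOn) ε hε
  filter_upwards [hd.eventually (gt_mem_nhds (lt_min hδ one_pos))] with i hi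
  obtain ⟨b, hb, hab⟩ := (infDist_lt_iff hy).1 hi
  have haK : a i ∈ K := self_subset_cthickening _ (mem_range_self i)
  have hbK : b ∈ K := mem_cthickening_of_dist_le b (a i) 1 _ (mem_range_self i)
    (by rw [dist_comm]; exact hab.le.trans (min_le_right _ _))
  have := hπδ _ haK _ hbK (hab.trans_le (min_le_left _ _))
  rwa [show π b = y from hb] at this

section HopfLax

variable {κ : ℕ} {Y : Set (EuclideanSpace ℝ (Fin κ))} {π : EuclideanSpace ℝ (Fin κ) → Y}
  {f : Y → EuclideanSpace ℝ (Fin κ)} {M t : ℝ} {y : Y}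

theorem neg_le_hlF (hM : ∀ z, ‖f z‖ ≤ M) (ht : 0 ≤ t) (z : Y) : -M ≤ hlF Y π f t y z := by
  have hsup := neg_le_of_abs_le ((abs_iSup_apply_le_norm (f z)).trans (hM z))
  have : 0 ≤ infDist (f z) (π ⁻¹' {y}) ^ 2 / (2 * t) := by positivity
  unfold hlF
  linarith

theorem iQ_le (hM : ∀ z, ‖f z‖ ≤ M) (ht : 0 ≤ t) (hy : π (f y) = y) : iQ Y π f t y ≤ M := by
  have hself : hlF Y π f t y y = ⨆ j, f y j := by
    simp [hlF, infDist_zero_of_mem (show f y ∈ π ⁻¹' {y} from hy)]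
  calc iQ Y π f t y ≤ hlF Y π f t y y :=
        ciInf_le ⟨-M, forall_mem_range.2 (neg_le_hlF hM ht)⟩ y
    _ = ⨆ j, f y j := hself
    _ ≤ M := (le_abs_self _).trans ((abs_iSup_apply_le_norm (f y)).trans (hM y))

theorem infDist_sq_le_of_hlF_le_iQ_add (hM : ∀ z, ‖f z‖ ≤ M) (ht : 0 < t) (hy : π (f y) = y)
    {z : Y} {e : ℝ} (hz : hlF Y π f t y z ≤ iQ Y π f t y + e) :
    infDist (f z) (π ⁻¹' {y}) ^ 2 ≤ 2 * t * (2 * M + e) := by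
  have hsup := neg_le_of_abs_le ((abs_iSup_apply_le_norm (f z)).trans (hM z))
  have hQ := iQ_le hM ht.le hy
  have hquot : infDist (f z) (π ⁻¹' {y}) ^ 2 / (2 * t) ≤ 2 * M + e := by
    unfold hlF at hz
    linarith
  rwa [div_le_iff₀ (by positivity), mul_comm] at hquot

theorem tendsto_infDist_fiber_of_almost_minimizing (hM : ∀ z, ‖f z‖ ≤ M) (hy : π (f y) = y)
    {ts : ℕ → ℝ} (hts : ∀ n, 0 < ts n) (hts0 : Tendsto ts atTop (𝓝 0)) {u : ℕ → Y}
    (hu : ∀ n : ℕ, 1 ≤ n → hlF Y π f (ts n) y (u n) ≤ iQ Y π f (ts n) y + 1 / (n : ℝ)) :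
    Tendsto (fun n => infDist (f (u n)) (π ⁻¹' {y})) atTop (𝓝 0) := by
  have hbound : Tendsto (fun n : ℕ => √(2 * ts n * (2 * M + 1 / (n : ℝ)))) atTop (𝓝 0) := by
    simpa using ((hts0.const_mul 2).mul
      (tendsto_one_div_atTop_nhds_zero_nat.const_add (2 * M))).sqrt
  refine squeeze_zero' (Eventually.of_forall fun n => infDist_nonneg) ?_ hbound
  filter_upwards [eventually_ge_atTop 1] with n hn
  exact Real.le_sqrt_of_sq_le (infDist_sq_le_of_hlF_le_iQ_add hM (hts n) hy (hu n hn))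

end HopfLax

theorem stmt_19_general (κ : ℕ)
    (Y : Set (EuclideanSpace ℝ (Fin κ)))
    (π : EuclideanSpace ℝ (Fin κ) → Y) (hπc : Continuous π)
    (f : Y → EuclideanSpace ℝ (Fin κ)) (hfc : Continuous f)
    (hfb : Bornology.IsBounded (Set.range f)) (hsec : ∀ y : Y, π (f y) = y)

    (y : Y) (ts : ℕ → ℝ) (hts : ∀ n, 0 < ts n)
    (hts0 : Filter.Tendsto ts Filter.atTop (nhds (0:ℝ)))
    (u : ℕ → Y)
    (hu : ∀ n : ℕ, 1 ≤ n →
      (⨆ j, f (u n) j) + (Metric.infDist (f (u n)) (π ⁻¹' {y}))^2 / (2 * ts n) ≤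
        iQ Y π f (ts n) y + 1 / (n : ℝ)) :
    Filter.Tendsto (fun n => Metric.infDist (f (u n)) (π ⁻¹' {y}))
        Filter.atTop (nhds 0) ∧
      Filter.Tendsto u Filter.atTop (nhds y) ∧
      Filter.Tendsto (fun n => f (u n)) Filter.atTop (nhds (f y)) := by
  obtain ⟨M, hM⟩ := isBounded_iff_forall_norm_le.1 hfb
  have hd := tendsto_infDist_fiber_of_almost_minimizing (fun z => hM _ (mem_range_self z))
    (hsec y) hts hts0 hu
  have hπu : Tendsto (π ∘ f ∘ u) atTop (𝓝 y) :=
    tendsto_of_infDist_fiber_tendsto_zero hπc (hfb.subset (range_comp_subset_range u f))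
      ⟨f y, hsec y⟩ hd
  have huy : Tendsto u atTop (𝓝 y) := by simpa only [Function.comp_def, hsec] using hπu
  exact ⟨hd, huy, (hfc.tendsto y).comp huy⟩

theorem stmt_19 (κ : ℕ) (hκ : 1 ≤ κ)
    (Y : Set (EuclideanSpace ℝ (Fin κ))) (hY : Y.Nonempty) (hYb : Bornology.IsBounded Y)
    (π : EuclideanSpace ℝ (Fin κ) → Y) (hπc : Continuous π) (hπo : IsOpenMap π)
    (hπs : Function.Surjective π)
    (f : Y → EuclideanSpace ℝ (Fin κ)) (hfc : Continuous f)
    (hfb : Bornology.IsBounded (Set.range f)) (hsec : ∀ y : Y, π (f y) = y)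

    (y : Y) (ts : ℕ → ℝ) (hts : ∀ n, 0 < ts n)
    (hts0 : Filter.Tendsto ts Filter.atTop (nhds (0:ℝ)))
    (u : ℕ → Y)
    (hu : ∀ n : ℕ, 1 ≤ n →
      (⨆ j, f (u n) j) + (Metric.infDist (f (u n)) (π ⁻¹' {y}))^2 / (2 * ts n) ≤
        iQ Y π f (ts n) y + 1 / (n : ℝ)) :
    Filter.Tendsto (fun n => Metric.infDist (f (u n)) (π ⁻¹' {y}))
        Filter.atTop (nhds 0) ∧
      Filter.Tendsto u Filter.atTop (nhds y) ∧
      Filter.Tendsto (fun n => f (u n)) Filter.atTop (nhds (f y)) :=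
  stmt_19_general κ Y π hπc f hfc hfb hsec y ts hts hts0 u hu
end
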